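/- Let (X_s)_{0<s≤1}, (Y_s)_{0<s≤1}, h of size τ, f, x₀, α, Ω_{j,s} (h-j-linear of norm ≤ 1) be as in the setting where f_s(x₀+w) = f_s(x₀) + Σ_{j≥1} α^j Ω_{j,s}(w) for ‖w‖ < 1/α, and let g_n ∈ X̊₁ satisfy ‖g_{n,s}‖ ≤ C₀·Cⁿ·n!/(1−s)ⁿ with C ≥ 1. Let b ≥ 0 be an integer, A > 0, and v_k = (v_{k,s}) ∈ X̊₁ (k ≥ 1) with ‖v_{k,s}‖ ≤ A·Cᵏ·k!/(1−s)ᵏ. Then there exist w_j = (w_{j,s}) ∈ Ẏ₁ with ‖w_{j,s}‖ ≤ (A/C₀)·β₁(C₀α)·Cʲ·j!/(1−s)ʲ, where β₁(t) = Σ_{k≥0} (k+1)·4ᵏ·t^{k+1}/k!, such that for every s with τC/(1−s) < 1 and Σ_{n≥1} τⁿCⁿ/(1−s)ⁿ < 1/(C₀α): the vectors v_s := h^b·Σ_{k≥1} hᵏ v_{k,s} and g_s := Σ_{k≥1} hᵏ g_{k,s} are given by absolutely convergent series in X_s, and Σ_{j≥1} j·α^j·Ω̃_{j,s}(g_s,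 …, g_s, v_s) = Σ_{j≥1} hʲ w_{j,s} in Y_s (the left-hand side is the Fréchet derivative f'(x₀+g_s) applied to v_s). -/

import Mathlib

/-!
Substitute `g = Σ_{k≥1} hᵏ g_k` and `v = h^b Σ_{k≥1} hᵏ v_k` into
`Σ_j (j+1) α^{j+1} Ω̃_{j+1}(g, …, g, v)` and expand every slot. Since `Ω̃` commutes with `h` in
each slot, the term indexed by `(j; k₀, …, k_j)` is `h^{b + k₀ + … + k_j}` applied to
`Ω̃_{j+1}(g_{k₀}, …, g_{k_{j-1}}, v_{k_j})`, so grouping by total degree produces `Σ_m hᵐ w_m`.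
The regrouping is legitimate because the expanded family is absolutely summable:
`‖hᵏ g_k‖ ≤ C₀ (τC/(1-s))ᵏ`, so the hypothesis on `Σ_n (τC/(1-s))ⁿ` gives
`α Σ_k ‖hᵏ g_k‖ < 1`. The bound on `w_m` comes from the count
`j! Σ_{k₀+…+k_j = n, kᵢ ≥ 1} Π kᵢ! ≤ 4ʲ n!`, which is where `β₁` comes from.
-/

/-- `β₁(t) = Σ_{k≥0} (k+1)·4ᵏ·t^{k+1}/k!` -/
noncomputable def beta1 (t : ℝ) : ℝ :=
  ∑' k : ℕ, (k + 1) * 4 ^ k * t ^ (k + 1) / k.factorial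

open Finset

theorem factorial_add_two_mul_factorial_add_two_le (a c : ℕ) :
    (a + 2).factorial * (c + 2).factorial ≤ 2 * (a + c + 2).factorial := by
  induction a with
  | zero => simp [Nat.factorial_two, add_comm]
  | succ a ih =>
    calc (a + 1 + 2).factorial * (c + 2).factorial
        = (a + 3) * ((a + 2).factorial * (c + 2).factorial) := by
          rw [show a + 1 + 2 = (a + 2) + 1 by ring, Nat.factorial_succ (a + 2)]; ring
      _ ≤ (a + c + 3) * (2 * (a + c + 2).factorial) := by gcongr; omega
      _ = 2 * (a + 1 + c + 2).factorial := by
          rw [show a + 1 + c + 2 = (a + c + 2) + 1 by ring, Nat.factorial_succ (a + c + 2)]; ring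

/-- The two extreme terms contribute `2 (n-1)!`, each of the `n - 3` others at most `2 (n-2)!`. -/
theorem sum_factorial_mul_factorial_le (n : ℕ) :
    ∑ l ∈ Icc 1 (n - 1), l.factorial * (n - l).factorial ≤ 4 * (n - 1).factorial := by
  rcases Nat.lt_or_ge n 3 with h | h
  · interval_cases n <;> simp
  obtain ⟨m, rfl⟩ : ∃ m, n = m + 3 := ⟨n - 3, by omega⟩
  have hsplit : Icc 1 (m + 3 - 1) = insert 1 (insert (m + 2) (Icc 2 (m + 1))) := by
    ext l; simp only [mem_Icc, mem_insert]; omega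
  have hmiddle : ∀ l ∈ Icc 2 (m + 1),
      l.factorial * (m + 3 - l).factorial ≤ 2 * (m + 1).factorial := by
    intro l hl
    obtain ⟨a, rfl⟩ : ∃ a, l = a + 2 := ⟨l - 2, by simp only [mem_Icc] at hl; omega⟩
    simp only [mem_Icc] at hl
    have := factorial_add_two_mul_factorial_add_two_le a (m - a - 1)
    rw [show a + (m - a - 1) + 2 = m + 1 by omega] at this
    rwa [show m + 3 - (a + 2) = m - a - 1 + 2 by omega]
  rw [hsplit, sum_insert (by simp), sum_insert (by simp)]
  have hcard := sum_le_card_nsmul _ _ _ hmiddle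
  simp only [Nat.card_Icc, smul_eq_mul] at hcard
  rw [show m + 3 - 1 = m + 2 by omega, show m + 3 - (m + 2) = 1 by omega,
    Nat.factorial_succ (m + 1)]
  simp only [Nat.factorial_one, one_mul, mul_one, show m + 1 + 1 - 2 = m by omega] at hcard ⊢
  nlinarith [Nat.factorial_pos (m + 1)]

def posCompositions (j n : ℕ) : Finset (Fin j → ℕ) :=
  (Fintype.piFinset fun _ => Icc 1 n).filter fun k => ∑ i, k i = n

theorem mem_posCompositions {j n : ℕ} {k : Fin j → ℕ} :
    k ∈ posCompositions j n ↔ (∀ i, 1 ≤ k i) ∧ ∑ i, k i = n := by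
  simp only [posCompositions, mem_filter, Fintype.mem_piFinset, mem_Icc]
  refine ⟨fun h => ⟨fun i => (h.1 i).1, h.2⟩, fun h => ⟨fun i => ⟨h.1 i, ?_⟩, h.2⟩⟩
  rw [← h.2]
  exact single_le_sum (fun i _ => Nat.zero_le _) (mem_univ i)

theorem le_sum_of_one_le {j : ℕ} {k : Fin j → ℕ} (hk : ∀ i, 1 ≤ k i) : j ≤ ∑ i, k i := by
  simpa using sum_le_sum fun i (_ : i ∈ univ) => hk i

theorem posCompositions_eq_empty {j n : ℕ} (h : n < j) : posCompositions j n = ∅ :=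
  eq_empty_of_forall_notMem fun _ hk => by
    have := le_sum_of_one_le (mem_posCompositions.1 hk).1
    have := (mem_posCompositions.1 hk).2
    omega

theorem sum_posCompositions_succ {M : Type*} [AddCommMonoid M] (j n : ℕ)
    (f : (Fin (j + 1) → ℕ) → M) :
    ∑ k ∈ posCompositions (j + 1) n, f k
      = ∑ l ∈ Icc 1 n, ∑ k ∈ posCompositions j (n - l), f (Fin.cons l k) := by
  rw [← sum_sigma (Icc 1 n) (fun l => posCompositions j (n - l)) fun x => f (Fin.cons x.1 x.2)]
  refine sum_nbij' (fun k => ⟨k 0, Fin.tail k⟩) (fun x => Fin.cons x.1 x.2) ?_ ?_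
    (fun k _ => Fin.cons_self_tail k) (fun x _ => by simp) (fun k _ => by rw [Fin.cons_self_tail])
  · intro k hk
    obtain ⟨hpos, hsum⟩ := mem_posCompositions.1 hk
    rw [Fin.sum_univ_succ] at hsum
    simp only [mem_sigma, mem_Icc, mem_posCompositions]
    exact ⟨⟨hpos 0, by omega⟩, fun i => hpos i.succ, by simp only [Fin.tail]; omega⟩
  · rintro ⟨l, k⟩ hx
    simp only [mem_sigma, mem_Icc, mem_posCompositions] at hx
    simp only [mem_posCompositions, Fin.sum_univ_succ, Fin.cons_zero, Fin.cons_succ]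
    exact ⟨Fin.cases (by simpa using hx.1.1) (by simpa using hx.2.1), by omega⟩

/-- Peel off the first part `l`; the remaining sum over `l` is `sum_factorial_mul_factorial_le`. -/
theorem factorial_mul_sum_prod_factorial_le (j n : ℕ) :
    j.factorial * ∑ k ∈ posCompositions (j + 1) n, ∏ i, (k i).factorial ≤ 4 ^ j * n.factorial := by
  induction j generalizing n with
  | zero =>
    rcases Nat.eq_zero_or_pos n with rfl | hn
    · simp [posCompositions_eq_empty zero_lt_one]
    have : posCompositions 1 n = {fun _ => n} := by
      ext k
      simp only [mem_posCompositions, Fin.sum_univ_one, mem_singleton]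
      exact ⟨fun h => funext fun i => by rw [Subsingleton.elim i 0]; exact h.2,
        fun h => by subst h; exact ⟨fun _ => hn, rfl⟩⟩
    simp [this]
  | succ j ih =>
    rcases Nat.lt_or_ge n (j + 2) with hn | hn
    · rw [posCompositions_eq_empty hn]; simp
    have hpeel : ∑ k ∈ posCompositions (j + 2) n, ∏ i, (k i).factorial
        = ∑ l ∈ Icc 1 (n - (j + 1)),
            l.factorial * ∑ k ∈ posCompositions (j + 1) (n - l), ∏ i, (k i).factorial := by
      rw [sum_posCompositions_succ]
      refine (sum_subset (Icc_subset_Icc_right (by omega)) fun l hl hl' => ?_).symm.trans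
        (sum_congr rfl fun l _ => ?_)
      · simp only [mem_Icc] at hl hl'
        simp [posCompositions_eq_empty (show n - l < j + 1 by omega)]
      · simp [mul_sum, Fin.prod_univ_succ]
    calc (j + 1).factorial * ∑ k ∈ posCompositions (j + 2) n, ∏ i, (k i).factorial
        = (j + 1) * ∑ l ∈ Icc 1 (n - (j + 1)), l.factorial *
            (j.factorial * ∑ k ∈ posCompositions (j + 1) (n - l), ∏ i, (k i).factorial) := by
          rw [hpeel, Nat.factorial_succ, mul_assoc, mul_sum (Icc 1 (n - (j + 1)))]
          exact congrArg _ (sum_congr rfl fun l _ => by ring)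
      _ ≤ (j + 1) * ∑ l ∈ Icc 1 (n - 1), l.factorial * (4 ^ j * (n - l).factorial) := by
          gcongr (j + 1) * ?_
          calc _ ≤ ∑ l ∈ Icc 1 (n - (j + 1)), l.factorial * (4 ^ j * (n - l).factorial) :=
                sum_le_sum fun l _ => Nat.mul_le_mul_left _ (ih _)
            _ ≤ _ := sum_le_sum_of_subset (Icc_subset_Icc_right (by omega))
      _ = 4 ^ j * ((j + 1) * ∑ l ∈ Icc 1 (n - 1), l.factorial * (n - l).factorial) := by
          rw [mul_sum, mul_sum, mul_sum]
          exact sum_congr rfl fun l _ => by ring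
      _ ≤ 4 ^ j * (n * (4 * (n - 1).factorial)) := by
          gcongr
          · omega
          · exact sum_factorial_mul_factorial_le n
      _ = 4 ^ (j + 1) * n.factorial := by
          rw [← Nat.mul_factorial_pred (by omega : n ≠ 0)]; ring

theorem sum_posCompositions_prod_factorial_le (j n : ℕ) :
    ∑ k ∈ posCompositions (j + 1) n, ∏ i, ((k i).factorial : ℝ)
      ≤ 4 ^ j * n.factorial / j.factorial := by
  rw [le_div_iff₀ (by positivity), mul_comm]
  exact_mod_cast factorial_mul_sum_prod_factorial_le j n


theorem summable_prod_apply_of_nonneg {d : ℕ} {f : Fin d → ℕ → ℝ} (hf : ∀ i l, 0 ≤ f i l)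
    (hs : ∀ i, Summable (f i)) : Summable fun k : Fin d → ℕ => ∏ i, f i (k i) := by
  induction d with
  | zero => exact Summable.of_finite
  | succ d ih =>
    have h := (hs 0).mul_of_nonneg (ih (fun i => hf i.succ) fun i => hs i.succ) (hf 0)
      fun k => prod_nonneg fun i _ => hf i.succ (k i)
    refine (Fin.consEquiv fun _ => ℕ).summable_iff.1 (h.congr fun x => ?_)
    simp [Fin.prod_univ_succ]

namespace ContinuousMultilinearMap

variable {𝕜 E F : Type*} [NontriviallyNormedField 𝕜] [NormedAddCommGroup E] [NormedSpace 𝕜 E]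
  [NormedAddCommGroup F] [NormedSpace 𝕜 F]

theorem hasSum_apply_of_summable_norm [CompleteSpace F] {d : ℕ}
    (M : ContinuousMultilinearMap 𝕜 (fun _ : Fin d => E) F) {u : Fin d → ℕ → E} {U : Fin d → E}
    (hu : ∀ i, Summable fun l => ‖u i l‖) (hU : ∀ i, HasSum (u i) (U i)) :
    HasSum (fun k : Fin d → ℕ => M fun i => u i (k i)) (M U) := by
  induction d with
  | zero =>
    convert hasSum_unique (fun k : Fin 0 → ℕ => M fun i => u i (k i))
  | succ d ih =>
    have hsum : Summable fun k : Fin (d + 1) → ℕ => M fun i => u i (k i) :=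
      .of_norm <| ((summable_prod_apply_of_nonneg (fun _ _ => norm_nonneg _) hu).mul_left ‖M‖
        ).of_nonneg_of_le (fun _ => norm_nonneg _) fun k => M.le_opNorm _
    obtain ⟨T, hT⟩ := hsum
    have hcons : ∀ (l : ℕ) (c : Fin d → ℕ),
        (M fun i => u i ((Fin.cons l c : Fin (d + 1) → ℕ) i))
          = M.curryLeft (u 0 l) fun i => u i.succ (c i) := by
      intro l c
      rw [curryLeft_apply]
      congr 1
      ext i
      cases i using Fin.cases <;> rfl
    have hT' : HasSum
        (fun x : ℕ × (Fin d → ℕ) => M.curryLeft (u 0 x.1) fun i => u i.succ (x.2 i)) T :=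
      ((Fin.consEquiv fun _ => ℕ).hasSum_iff.2 hT).congr_fun fun x => by simp [hcons]
    have hfirst : HasSum (fun l => M.curryLeft (u 0 l) fun i => U i.succ)
        (M.curryLeft (U 0) fun i => U i.succ) :=
      (apply 𝕜 (fun _ : Fin d => E) F fun i => U i.succ).hasSum (M.curryLeft.hasSum (hU 0))
    have hMU : M U = M.curryLeft (U 0) fun i => U i.succ := by
      rw [curryLeft_apply]
      exact congrArg M (Fin.cons_self_tail U).symm
    have hfibers : HasSum (fun l => M.curryLeft (u 0 l) fun i => U i.succ) T :=
      hT'.prod_fiberwise fun l => ih (M.curryLeft (u 0 l)) (fun i => hu i.succ) fun i => hU i.succ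
    rwa [hMU, ← hfibers.unique hfirst]

theorem apply_pow_eq_pow_apply {ι : Type*} [Fintype ι] [DecidableEq ι]
    (M : ContinuousMultilinearMap 𝕜 (fun _ : ι => E) F) (T : E →L[𝕜] E) (S : F →L[𝕜] F)
    (hM : ∀ (x : ι → E) (i : ι), M (Function.update x i (T (x i))) = S (M x))
    (c : ι → ℕ) (x : ι → E) : M (fun i => (T ^ c i) (x i)) = (S ^ ∑ i, c i) (M x) := by
  induction hn : ∑ i, c i generalizing c with
  | zero =>
    have hc : ∀ i, c i = 0 := fun i => (sum_eq_zero_iff.1 hn) i (mem_univ i)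
    simp [hc]
  | succ n ih =>
    obtain ⟨i₀, hi₀⟩ : ∃ i₀, c i₀ ≠ 0 := by
      by_contra! h
      simp [h] at hn
    set c' := Function.update c i₀ (c i₀ - 1)
    have hc' : ∑ i, c' i = n := by
      rw [← add_sum_erase _ _ (mem_univ i₀)] at hn
      rw [sum_update_of_mem (mem_univ i₀), sdiff_singleton_eq_erase]
      omega
    have hupdate : (fun i => (T ^ c i) (x i))
        = Function.update (fun i => (T ^ c' i) (x i)) i₀ (T ((T ^ c' i₀) (x i₀))) := by
      ext i
      rcases eq_or_ne i i₀ with rfl | hne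
      · rw [Function.update_self, ← mul_apply_eq_comp, ← pow_succ']
        simp only [c', Function.update_self, Nat.sub_add_cancel (Nat.one_le_iff_ne_zero.2 hi₀)]
      · simp [c', hne]
    rw [hupdate, hM, ih c' hc', pow_succ', mul_apply_eq_comp]

end ContinuousMultilinearMap

theorem hasSum_prod_apply {d : ℕ} {f : Fin d → ℕ → ℝ} {a : Fin d → ℝ}
    (ha : ∀ i, HasSum (f i) (a i)) : HasSum (fun k : Fin d → ℕ => ∏ i, f i (k i)) (∏ i, a i) := by
  simpa using (ContinuousMultilinearMap.mkPiAlgebra ℝ (Fin d) ℝ).hasSum_apply_of_summable_norm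
    (fun i => (ha i).summable.abs.congr fun l => (Real.norm_eq_abs _).symm) ha

theorem HasSum.sum_finset_fiberwise {α β γ : Type*} [AddCommMonoid α] [TopologicalSpace α]
    [ContinuousAdd α] [RegularSpace α] {f : β → α} {a : α} (hf : HasSum f a) (q : β → γ)
    (T : γ → Finset β) (hT : ∀ c, ∀ x ∈ T c, q x = c) (hzero : ∀ x, x ∉ T (q x) → f x = 0) :
    HasSum (fun c => ∑ x ∈ T c, f x) a := by
  classical
  refine ((Equiv.sigmaFiberEquiv q).hasSum_iff.2 hf).sigma fun c => ?_
  rw [← filter_true_of_mem (hT c), ← sum_subtype_eq_sum_filter]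
  refine hasSum_sum_of_ne_finset_zero fun y hy => hzero y ?_
  rw [y.2]
  simpa using hy

theorem Fin.prod_ite_val_eq_last {M : Type*} [CommMonoid M] (j : ℕ) (a c : M) :
    ∏ i : Fin (j + 1), (if (i : ℕ) = j then a else c) = c ^ j * a := by
  simp [Fin.prod_univ_castSucc, fun i : Fin j => i.isLt.ne]

theorem Fin.sum_ite_val_eq_last {M : Type*} [AddCommMonoid M] (j : ℕ) (a : M) :
    ∑ i : Fin (j + 1), (if (i : ℕ) = j then a else 0) = a := by
  simp [Fin.sum_univ_castSucc, fun i : Fin j => i.isLt.ne]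

theorem summable_succ_mul_pow_div_factorial (x : ℝ) :
    Summable fun j : ℕ => ((j : ℝ) + 1) * x ^ j / j.factorial := by
  refine .of_norm_bounded (Real.summable_pow_div_factorial (2 * |x|)) fun j => ?_
  rw [Real.norm_eq_abs, abs_div, abs_mul, Nat.abs_cast, mul_pow, abs_pow]
  gcongr
  rw [abs_of_nonneg (by positivity)]
  exact_mod_cast Nat.lt_two_pow_self

theorem sum_le_beta1 {t : ℝ} (ht : 0 ≤ t) (s : Finset ℕ) :
    ∑ k ∈ s, ((k : ℝ) + 1) * 4 ^ k * t ^ (k + 1) / k.factorial ≤ beta1 t := by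
  refine Summable.sum_le_tsum s (fun k _ => by positivity) ?_
  refine ((summable_succ_mul_pow_div_factorial (4 * t)).mul_right t).congr fun k => ?_
  ring

theorem beta1_nonneg {t : ℝ} (ht : 0 ≤ t) : 0 ≤ beta1 t :=
  tsum_nonneg fun k => by positivity

section DerivativeSeries

variable {E F : Type*} [NormedAddCommGroup E] [NormedSpace ℝ E] [NormedAddCommGroup F]
  [NormedSpace ℝ F] (M : ∀ j : ℕ, ContinuousMultilinearMap ℝ (fun _ : Fin j => E) F) (α : ℝ)

/-- The coefficient of `hⁿ` in `Σ_j (j+1) α^{j+1} M_{j+1}(g, …, g, v)` once `g = Σ_{l≥1} hˡ p_l` and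
`v = Σ_{l≥1} hˡ q_l` are substituted and `M` is `h`-multilinear. -/
def derivCoeff (p q : ℕ → E) (n : ℕ) : F :=
  ∑ j ∈ range n, (((j : ℝ) + 1) * α ^ (j + 1)) •
    ∑ k ∈ posCompositions (j + 1) n, M (j + 1) fun i => (if (i : ℕ) = j then q else p) (k i)

@[simp] theorem derivCoeff_zero (p q : ℕ → E) : derivCoeff M α p q 0 = 0 := by
  simp [derivCoeff]

theorem map_derivCoeff {E' F' : Type*} [NormedAddCommGroup E'] [NormedSpace ℝ E']
    [NormedAddCommGroup F'] [NormedSpace ℝ F']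
    (M' : ∀ j : ℕ, ContinuousMultilinearMap ℝ (fun _ : Fin j => E') F') (L : F →L[ℝ] F')
    (L' : E → E')
    (hL : ∀ j (x : Fin (j + 1) → E), L (M (j + 1) x) = M' (j + 1) fun i => L' (x i))
    (p q : ℕ → E) (n : ℕ) :
    L (derivCoeff M α p q n) = derivCoeff M' α (fun l => L' (p l)) (fun l => L' (q l)) n := by
  simp only [derivCoeff, map_sum, map_smul, hL]
  congr! 6 with j _ k _ i
  split_ifs <;> rfl

/-- The derivative series expanded slot by slot: summing over `k` for fixed `j` gives back its
`j`-th term, summing by total degree gives the `derivCoeff`s. -/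
def derivFamily (P Q : ℕ → E) (x : Σ j : ℕ, Fin (j + 1) → ℕ) : F :=
  (((x.1 : ℝ) + 1) * α ^ (x.1 + 1)) • M (x.1 + 1) fun i => (if (i : ℕ) = x.1 then Q else P) (x.2 i)

/-- The terms of `T ^ b Σ_{l≥1} Tˡ p_l`, padded with a zero term at `l = 0`. -/
def opSeries (T : E →L[ℝ] E) (b : ℕ) (p : ℕ → E) (l : ℕ) : E :=
  if l = 0 then 0 else (T ^ (b + l)) (p l)

variable {M α}

theorem norm_apply_posComposition_le (hM : ∀ j (x : Fin (j + 1) → E), ‖M (j + 1) x‖ ≤ ∏ i, ‖x i‖)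
    {p q : ℕ → E} {C₀ A ρ : ℝ} (hp : ∀ l, 1 ≤ l → ‖p l‖ ≤ C₀ * ρ ^ l * l.factorial)
    (hq : ∀ l, 1 ≤ l → ‖q l‖ ≤ A * ρ ^ l * l.factorial) {j n : ℕ} {k : Fin (j + 1) → ℕ}
    (hk : k ∈ posCompositions (j + 1) n) :
    ‖M (j + 1) fun i => (if (i : ℕ) = j then q else p) (k i)‖
      ≤ C₀ ^ j * A * ρ ^ n * ∏ i, ((k i).factorial : ℝ) := by
  obtain ⟨hpos, hsum⟩ := mem_posCompositions.1 hk
  calc _ ≤ ∏ i : Fin (j + 1), ‖(if (i : ℕ) = j then q else p) (k i)‖ := hM j _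
    _ ≤ ∏ i : Fin (j + 1), (if (i : ℕ) = j then A else C₀) * (ρ ^ k i * (k i).factorial) := by
        refine prod_le_prod (fun _ _ => norm_nonneg _) fun i _ => ?_
        split_ifs
        · exact (hq _ (hpos i)).trans_eq (mul_assoc _ _ _)
        · exact (hp _ (hpos i)).trans_eq (mul_assoc _ _ _)
    _ = _ := by
        rw [prod_mul_distrib, Fin.prod_ite_val_eq_last, prod_mul_distrib, prod_pow_eq_pow_sum, hsum]
        ring

theorem norm_derivCoeff_le (hM : ∀ j (x : Fin (j + 1) → E), ‖M (j + 1) x‖ ≤ ∏ i, ‖x i‖)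
    (hα : 0 ≤ α) {p q : ℕ → E} {C₀ A ρ : ℝ} (hC₀ : 0 < C₀) (hA : 0 ≤ A) (hρ : 0 ≤ ρ)
    (hp : ∀ l, 1 ≤ l → ‖p l‖ ≤ C₀ * ρ ^ l * l.factorial)
    (hq : ∀ l, 1 ≤ l → ‖q l‖ ≤ A * ρ ^ l * l.factorial) (n : ℕ) :
    ‖derivCoeff M α p q n‖ ≤ A / C₀ * beta1 (C₀ * α) * ρ ^ n * n.factorial := by
  have hterm : ∀ j : ℕ, ‖(((j : ℝ) + 1) * α ^ (j + 1)) • ∑ k ∈ posCompositions (j + 1) n,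
        M (j + 1) fun i => (if (i : ℕ) = j then q else p) (k i)‖
      ≤ A / C₀ * ρ ^ n * n.factorial *
          (((j : ℝ) + 1) * 4 ^ j * (C₀ * α) ^ (j + 1) / j.factorial) := by
    intro j
    rw [norm_smul, Real.norm_of_nonneg (by positivity)]
    calc _ ≤ ((j : ℝ) + 1) * α ^ (j + 1) * ∑ k ∈ posCompositions (j + 1) n,
            C₀ ^ j * A * ρ ^ n * ∏ i, ((k i).factorial : ℝ) := by
          gcongr
          exact (norm_sum_le _ _).trans
            (sum_le_sum fun k hk => norm_apply_posComposition_le hM hp hq hk)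
      _ ≤ ((j : ℝ) + 1) * α ^ (j + 1) *
            (C₀ ^ j * A * ρ ^ n * (4 ^ j * n.factorial / j.factorial)) := by
          rw [← mul_sum]
          gcongr
          exact sum_posCompositions_prod_factorial_le j n
      _ = _ := by
          field_simp
          ring
  calc _ ≤ ∑ j ∈ range n, A / C₀ * ρ ^ n * n.factorial *
          (((j : ℝ) + 1) * 4 ^ j * (C₀ * α) ^ (j + 1) / j.factorial) :=
        (norm_sum_le _ _).trans (sum_le_sum fun j _ => hterm j)
    _ ≤ A / C₀ * ρ ^ n * n.factorial * beta1 (C₀ * α) := by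
        rw [← mul_sum]
        gcongr
        exact sum_le_beta1 (by positivity) _
    _ = _ := by ring

section OpSeries

variable {T : E →L[ℝ] E} {b : ℕ} {p : ℕ → E}

@[simp] theorem opSeries_zero : opSeries T b p 0 = 0 := if_pos rfl

theorem opSeries_succ (l : ℕ) : opSeries T b p (l + 1) = (T ^ (b + (l + 1))) (p (l + 1)) :=
  if_neg l.succ_ne_zero

theorem hasSum_opSeries_iff {a : E} :
    HasSum (opSeries T b p) a ↔ HasSum (fun l => (T ^ (b + (l + 1))) (p (l + 1))) a := by
  rw [← hasSum_nat_add_iff' 1]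
  simp only [range_one, sum_singleton, opSeries_succ, opSeries_zero, sub_zero]

theorem summable_norm_opSeries_iff :
    (Summable fun l => ‖opSeries T b p l‖) ↔
      Summable fun l => ‖(T ^ (b + (l + 1))) (p (l + 1))‖ := by
  rw [← summable_nat_add_iff 1]
  simp only [opSeries_succ]

theorem tsum_norm_opSeries (h : Summable fun l => ‖(T ^ (b + (l + 1))) (p (l + 1))‖) :
    ∑' l, ‖opSeries T b p l‖ = ∑' l, ‖(T ^ (b + (l + 1))) (p (l + 1))‖ := by
  rw [tsum_eq_zero_add' (by simpa only [opSeries_succ] using h)]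
  simp only [opSeries_zero, norm_zero, zero_add, opSeries_succ]

end OpSeries

/-- The family is dominated by the expansion of `Σ_j (j+1) α^{j+1} ‖P‖₁ʲ ‖Q‖₁`, which converges
because `α ‖P‖₁ < 1`. -/
theorem summable_norm_derivFamily (hM : ∀ j (x : Fin (j + 1) → E), ‖M (j + 1) x‖ ≤ ∏ i, ‖x i‖)
    (hα : 0 ≤ α) {P Q : ℕ → E} (hP : Summable fun l => ‖P l‖) (hQ : Summable fun l => ‖Q l‖)
    (hPα : α * ∑' l, ‖P l‖ < 1) : Summable fun x => ‖derivFamily M α P Q x‖ := by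
  set a := ∑' l, ‖P l‖
  set c := ∑' l, ‖Q l‖
  set G : (Σ j : ℕ, Fin (j + 1) → ℕ) → ℝ := fun x =>
    ((x.1 : ℝ) + 1) * α ^ (x.1 + 1) *
      ∏ i : Fin (x.1 + 1), ‖(if (i : ℕ) = x.1 then Q else P) (x.2 i)‖
  have hG : ∀ j : ℕ, HasSum (fun k => G ⟨j, k⟩) (((j : ℝ) + 1) * α ^ (j + 1) * (a ^ j * c)) := by
    intro j
    rw [← Fin.prod_ite_val_eq_last]
    refine (hasSum_prod_apply (f := fun i l => ‖(if (i : ℕ) = j then Q else P) l‖)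
      fun i => ?_).mul_left _
    split_ifs
    exacts [hQ.hasSum, hP.hasSum]
  have hGsum : Summable G := by
    refine (summable_sigma_of_nonneg fun x => by positivity).2 ⟨fun j => (hG j).summable, ?_⟩
    have hr : ‖α * a‖ < 1 := by rwa [Real.norm_of_nonneg (by positivity)]
    refine (((summable_pow_mul_geometric_of_norm_lt_one 1 hr).add
      (summable_geometric_of_norm_lt_one hr)).mul_left (α * c)).congr fun j => ?_
    rw [(hG j).tsum_eq]
    ring
  refine hGsum.of_nonneg_of_le (fun _ => norm_nonneg _) fun x => ?_
  rw [derivFamily, norm_smul, Real.norm_of_nonneg (by positivity)]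
  exact mul_le_mul_of_nonneg_left (hM _ _) (by positivity)

theorem HasSum.derivFamily_sigma [CompleteSpace F] {P Q : ℕ → E} {gs vs : E} {S : F}
    (hS : HasSum (derivFamily M α P Q) S) (hP : Summable fun l => ‖P l‖)
    (hQ : Summable fun l => ‖Q l‖) (hgs : HasSum P gs) (hvs : HasSum Q vs) :
    HasSum (fun j : ℕ => (((j : ℝ) + 1) * α ^ (j + 1)) •
      M (j + 1) fun i => if (i : ℕ) = j then vs else gs) S :=
  hS.sigma fun j => ((M (j + 1)).hasSum_apply_of_summable_norm
    (u := fun i => if (i : ℕ) = j then Q else P) (fun i => by split_ifs; exacts [hQ, hP])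
    (fun i => by split_ifs; exacts [hvs, hgs])).const_smul _

section Degree

variable (hE : E →L[ℝ] E) (hF : F →L[ℝ] F)

theorem apply_opSeries_eq
    (hMh : ∀ j (x : Fin (j + 1) → E) i,
      M (j + 1) (Function.update x i (hE (x i))) = hF (M (j + 1) x))
    (b : ℕ) (p q : ℕ → E) {j : ℕ} {k : Fin (j + 1) → ℕ} (hk : ∀ i, 1 ≤ k i) :
    (M (j + 1) fun i => (if (i : ℕ) = j then opSeries hE b q else opSeries hE 0 p) (k i))
      = (hF ^ (b + ∑ i, k i)) (M (j + 1) fun i => (if (i : ℕ) = j then q else p) (k i)) := by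
  have hsum : ∑ i : Fin (j + 1), ((if (i : ℕ) = j then b else 0) + k i) = b + ∑ i, k i := by
    rw [sum_add_distrib, Fin.sum_ite_val_eq_last]
  rw [← hsum, ← (M (j + 1)).apply_pow_eq_pow_apply hE hF (hMh j)]
  congr 1
  ext i
  have hki : k i ≠ 0 := Nat.one_le_iff_ne_zero.1 (hk i)
  split_ifs <;> simp only [opSeries, hki, if_false, zero_add]

theorem HasSum.derivFamily_degree
    (hMh : ∀ j (x : Fin (j + 1) → E) i,
      M (j + 1) (Function.update x i (hE (x i))) = hF (M (j + 1) x))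
    (b : ℕ) (p q : ℕ → E) {S : F}
    (hS : HasSum (derivFamily M α (opSeries hE 0 p) (opSeries hE b q)) S) :
    HasSum (fun m => (hF ^ m) (derivCoeff M α p q (m - b))) S := by
  refine (hS.sum_finset_fiberwise (fun x => b + ∑ i, x.2 i)
    (fun m => (range (m - b)).sigma fun j => posCompositions (j + 1) (m - b)) ?_ ?_).congr_fun
    fun m => ?_
  · rintro m ⟨j, k⟩ hx
    dsimp only
    simp only [mem_sigma, mem_range, mem_posCompositions] at hx
    have := le_sum_of_one_le hx.2.1
    omega
  · rintro ⟨j, k⟩ hx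
    simp only [mem_sigma, mem_range, mem_posCompositions, not_and] at hx
    obtain ⟨i, hi⟩ : ∃ i, k i = 0 := by
      by_contra! h
      have hpos : ∀ i, 1 ≤ k i := fun i => Nat.one_le_iff_ne_zero.2 (h i)
      have := le_sum_of_one_le hpos
      exact hx (by omega) hpos (by omega)
    rw [derivFamily, (M _).map_coord_zero i (by split_ifs <;> simp [opSeries, hi]), smul_zero]
  · rw [sum_sigma, derivCoeff, map_sum]
    refine sum_congr rfl fun j hj => ?_
    rw [map_smul, map_sum, smul_sum]
    refine sum_congr rfl fun k hk => ?_
    obtain ⟨hpos, hsum⟩ := mem_posCompositions.1 hk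
    rw [derivFamily, apply_opSeries_eq hE hF hMh b p q hpos, hsum,
      show b + (m - b) = m by simp only [mem_range] at hj; omega]

end Degree

theorem exists_hasSum_derivSeries [CompleteSpace F] (hE : E →L[ℝ] E) (hF : F →L[ℝ] F)
    (hM : ∀ j (x : Fin (j + 1) → E), ‖M (j + 1) x‖ ≤ ∏ i, ‖x i‖)
    (hMh : ∀ j (x : Fin (j + 1) → E) i,
      M (j + 1) (Function.update x i (hE (x i))) = hF (M (j + 1) x))
    (hα : 0 ≤ α) (b : ℕ) {p q : ℕ → E} {gs vs : E}
    (hp : Summable fun l => ‖(hE ^ (l + 1)) (p (l + 1))‖)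
    (hq : Summable fun l => ‖(hE ^ (b + (l + 1))) (q (l + 1))‖)
    (hpα : α * ∑' l, ‖(hE ^ (l + 1)) (p (l + 1))‖ < 1)
    (hgs : HasSum (fun l => (hE ^ (l + 1)) (p (l + 1))) gs)
    (hvs : HasSum (fun l => (hE ^ (b + (l + 1))) (q (l + 1))) vs) :
    ∃ S : F,
      HasSum (fun j : ℕ => (((j : ℝ) + 1) * α ^ (j + 1)) •
        M (j + 1) fun i => if (i : ℕ) = j then vs else gs) S ∧
      HasSum (fun m => (hF ^ (m + 1)) (derivCoeff M α p q (m + 1 - b))) S := by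
  have hp₀ : Summable fun l => ‖(hE ^ (0 + (l + 1))) (p (l + 1))‖ := by
    simpa only [zero_add] using hp
  have hP := summable_norm_opSeries_iff.2 hp₀
  have hQ := summable_norm_opSeries_iff.2 hq
  have hPα : α * ∑' l, ‖opSeries hE 0 p l‖ < 1 := by
    simpa only [tsum_norm_opSeries hp₀, zero_add] using hpα
  obtain ⟨S, hS⟩ := (summable_norm_derivFamily hM hα hP hQ hPα).of_norm
  refine ⟨S, hS.derivFamily_sigma hP hQ (hasSum_opSeries_iff.2 (by simpa only [zero_add] using hgs))
    (hasSum_opSeries_iff.2 hvs), ?_⟩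
  simpa only [range_one, sum_singleton, zero_tsub, derivCoeff_zero, map_zero, sub_zero] using
    (hasSum_nat_add_iff' 1).2 (hS.derivFamily_degree hE hF hMh b p q)

end DerivativeSeries

theorem norm_pow_apply_le_of_gevrey {E : Type*} [NormedAddCommGroup E] [NormedSpace ℝ E]
    {T : E →L[ℝ] E} {τ K ρ : ℝ}
    (hT : ∀ n : ℕ, 1 ≤ n → ∀ x : E, ‖(T ^ n) x‖ ≤ τ ^ n / n.factorial * ‖x‖)
    (hτ : 0 ≤ τ) (hK : 0 ≤ K) (hρ : 0 ≤ ρ) (b : ℕ) {l : ℕ} (hl : 1 ≤ l) {u : E}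
    (hu : ‖u‖ ≤ K * ρ ^ l * l.factorial) : ‖(T ^ (b + l)) u‖ ≤ K * τ ^ b * (τ * ρ) ^ l := by
  calc _ ≤ τ ^ (b + l) / (b + l).factorial * (K * ρ ^ l * l.factorial) :=
        (hT _ (by omega) u).trans (by gcongr)
    _ = K * τ ^ b * (τ * ρ) ^ l * (l.factorial / (b + l).factorial) := by
        field_simp
        ring
    _ ≤ K * τ ^ b * (τ * ρ) ^ l :=
        mul_le_of_le_one_right (by positivity)
          ((div_le_one (by positivity)).2 (by exact_mod_cast Nat.factorial_le (by omega)))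

theorem summable_norm_pow_apply_of_gevrey {E : Type*} [NormedAddCommGroup E] [NormedSpace ℝ E]
    {T : E →L[ℝ] E} {τ K ρ : ℝ}
    (hT : ∀ n : ℕ, 1 ≤ n → ∀ x : E, ‖(T ^ n) x‖ ≤ τ ^ n / n.factorial * ‖x‖)
    (hτ : 0 ≤ τ) (hK : 0 ≤ K) (hρ : 0 ≤ ρ) (hr : τ * ρ < 1) (b : ℕ) {u : ℕ → E}
    (hu : ∀ l, 1 ≤ l → ‖u l‖ ≤ K * ρ ^ l * l.factorial) :
    (Summable fun l => ‖(T ^ (b + (l + 1))) (u (l + 1))‖) ∧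
      ∑' l, ‖(T ^ (b + (l + 1))) (u (l + 1))‖ ≤ K * τ ^ b * ∑' l, (τ * ρ) ^ (l + 1) := by
  have hgeom : Summable fun l => (τ * ρ) ^ (l + 1) :=
    (summable_nat_add_iff 1).2 (summable_geometric_of_lt_one (by positivity) hr)
  have hle : ∀ l, ‖(T ^ (b + (l + 1))) (u (l + 1))‖ ≤ K * τ ^ b * (τ * ρ) ^ (l + 1) :=
    fun l => norm_pow_apply_le_of_gevrey hT hτ hK hρ b (by omega) (hu _ (by omega))
  have hsum := (hgeom.mul_left _).of_nonneg_of_le (fun _ => norm_nonneg _) hle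
  exact ⟨hsum, (hsum.tsum_le_tsum hle (hgeom.mul_left _)).trans_eq tsum_mul_left⟩

theorem hasSum_derivSeries_of_gevrey {E F : Type*} [NormedAddCommGroup E] [NormedSpace ℝ E]
    [CompleteSpace E] [NormedAddCommGroup F] [NormedSpace ℝ F] [CompleteSpace F]
    {M : ∀ j : ℕ, ContinuousMultilinearMap ℝ (fun _ : Fin j => E) F} (hE : E →L[ℝ] E)
    (hF : F →L[ℝ] F)
    {α τ ρ C₀ A : ℝ} (hα : 0 < α) (hτ : 0 ≤ τ) (hρ : 0 ≤ ρ) (hC₀ : 0 < C₀) (hA : 0 ≤ A)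
    (hM : ∀ j (x : Fin (j + 1) → E), ‖M (j + 1) x‖ ≤ ∏ i, ‖x i‖)
    (hMh : ∀ j (x : Fin (j + 1) → E) i,
      M (j + 1) (Function.update x i (hE (x i))) = hF (M (j + 1) x))
    (hE_norm : ∀ n : ℕ, 1 ≤ n → ∀ x : E, ‖(hE ^ n) x‖ ≤ τ ^ n / n.factorial * ‖x‖)
    (hr : τ * ρ < 1) (hrα : ∑' n : ℕ, (τ * ρ) ^ (n + 1) < 1 / (C₀ * α))
    (b : ℕ) {p q : ℕ → E} (hp : ∀ l, 1 ≤ l → ‖p l‖ ≤ C₀ * ρ ^ l * l.factorial)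
    (hq : ∀ l, 1 ≤ l → ‖q l‖ ≤ A * ρ ^ l * l.factorial) :
    (Summable fun l => ‖(hE ^ (b + (l + 1))) (q (l + 1))‖) ∧
      (Summable fun l => ‖(hE ^ (l + 1)) (p (l + 1))‖) ∧
      ∃ vs gs : E,
        HasSum (fun l => (hE ^ (b + (l + 1))) (q (l + 1))) vs ∧
        HasSum (fun l => (hE ^ (l + 1)) (p (l + 1))) gs ∧
        ∃ S : F,
          HasSum (fun j : ℕ => (((j : ℝ) + 1) * α ^ (j + 1)) •
            M (j + 1) fun i => if (i : ℕ) = j then vs else gs) S ∧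
          HasSum (fun m => (hF ^ (m + 1)) (derivCoeff M α p q (m + 1 - b))) S := by
  obtain ⟨hpsum, hptsum⟩ := summable_norm_pow_apply_of_gevrey hE_norm hτ hC₀.le hρ hr 0 hp
  obtain ⟨hqsum, -⟩ := summable_norm_pow_apply_of_gevrey hE_norm hτ hA hρ hr b hq
  simp only [zero_add, pow_zero, mul_one] at hpsum hptsum
  have hpα : α * ∑' l, ‖(hE ^ (l + 1)) (p (l + 1))‖ < 1 := calc
    _ ≤ α * (C₀ * ∑' n : ℕ, (τ * ρ) ^ (n + 1)) := by gcongr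
    _ < α * (C₀ * (1 / (C₀ * α))) := by gcongr
    _ = 1 := by field_simp
  obtain ⟨vs, hvs⟩ := hqsum.of_norm
  obtain ⟨gs, hgs⟩ := hpsum.of_norm
  exact ⟨hqsum, hpsum, vs, gs, hvs, hgs,
    exists_hasSum_derivSeries hE hF hM hMh hα.le b hpsum hqsum hpα hgs hvs⟩

theorem stmt11_general
    -- scales of Banach spaces (X_s), (Y_s), 0 < s ≤ 1
    {X Y : ℝ → Type*}
    [∀ s, NormedAddCommGroup (X s)] [∀ s, NormedSpace ℝ (X s)] [∀ s, CompleteSpace (X s)]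
    [∀ s, NormedAddCommGroup (Y s)] [∀ s, NormedSpace ℝ (Y s)] [∀ s, CompleteSpace (Y s)]
    (incX : ∀ s' s : ℝ, X s →L[ℝ] X s')
    (incY : ∀ s' s : ℝ, Y s →L[ℝ] Y s')
    -- the operator h of size τ
    (τ : ℝ) (hτ : 0 < τ)
    (hX : ∀ s : ℝ, X s →L[ℝ] X s) (hY : ∀ s : ℝ, Y s →L[ℝ] Y s)
    (hhX_norm : ∀ s : ℝ, 0 < s → s ≤ 1 → ∀ n : ℕ, 1 ≤ n → ∀ x : X s,
      ‖(hX s ^ n) x‖ ≤ τ ^ n / n.factorial * ‖x‖)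
    (α : ℝ) (hα : 0 < α)
    -- the h-j-linear maps Ω_j of norm ≤ 1, compatible with inclusions
    (Ω : ∀ (j : ℕ) (s : ℝ), ContinuousMultilinearMap ℝ (fun _ : Fin j => X s) (Y s))
    (hΩ_norm : ∀ j : ℕ, 1 ≤ j → ∀ s : ℝ, 0 < s → s ≤ 1 → ∀ v : Fin j → X s,
      ‖Ω j s v‖ ≤ ∏ i, ‖v i‖)
    (hΩ_h : ∀ j : ℕ, 1 ≤ j → ∀ s : ℝ, 0 < s → s ≤ 1 → ∀ (v : Fin j → X s) (i : Fin j),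
      Ω j s (Function.update v i (hX s (v i))) = hY s (Ω j s v))
    (hΩ_inc : ∀ j : ℕ, 1 ≤ j → ∀ s' s : ℝ, 0 < s' → s' ≤ s → s ≤ 1 → ∀ v : Fin j → X s,
      incY s' s (Ω j s v) = Ω j s' fun i => incX s' s (v i))
    -- the Gevrey data g_n ∈ X̊₁
    (C₀ C : ℝ) (hC₀ : 0 < C₀)
    (g : ℕ → ∀ s : ℝ, X s)
    (hg_inc : ∀ (n : ℕ) (s' s : ℝ), 0 < s' → s' ≤ s → s < 1 → incX s' s (g n s) = g n s')
    (hg_bound : ∀ n : ℕ, 1 ≤ n → ∀ s : ℝ, 0 < s → s < 1 →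
      ‖g n s‖ ≤ C₀ * C ^ n * n.factorial / (1 - s) ^ n)
    (hC1 : 1 ≤ C)
    -- the data b, A and v_k ∈ X̊₁
    (b : ℕ) (A : ℝ) (hA : 0 < A)
    (v : ℕ → ∀ s : ℝ, X s)
    (hv_inc : ∀ (k : ℕ) (s' s : ℝ), 0 < s' → s' ≤ s → s < 1 → incX s' s (v k s) = v k s')
    (hv_bound : ∀ k : ℕ, 1 ≤ k → ∀ s : ℝ, 0 < s → s < 1 →
      ‖v k s‖ ≤ A * C ^ k * k.factorial / (1 - s) ^ k) :
    ∃ w : ℕ → ∀ s : ℝ, Y s,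
      (∀ (j : ℕ) (s' s : ℝ), 0 < s' → s' ≤ s → s < 1 → incY s' s (w j s) = w j s') ∧
      (∀ j : ℕ, 1 ≤ j → ∀ s : ℝ, 0 < s → s < 1 →
        ‖w j s‖ ≤ A / C₀ * beta1 (C₀ * α) * C ^ j * j.factorial / (1 - s) ^ j) ∧
      ∀ s : ℝ, 0 < s → s < 1 → τ * C / (1 - s) < 1 →
        (∑' n : ℕ, (τ * C / (1 - s)) ^ (n + 1)) < 1 / (C₀ * α) →
        -- v_s = h^b Σ_{k≥1} h^k v_{k,s} and g_s = Σ_{k≥1} h^k g_{k,s} converge absolutely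
        Summable (fun k : ℕ => ‖(hX s ^ (b + (k + 1))) (v (k + 1) s)‖) ∧
        Summable (fun k : ℕ => ‖(hX s ^ (k + 1)) (g (k + 1) s)‖) ∧
        ∃ (vs gs : X s),
          HasSum (fun k : ℕ => (hX s ^ (b + (k + 1))) (v (k + 1) s)) vs ∧
          HasSum (fun k : ℕ => (hX s ^ (k + 1)) (g (k + 1) s)) gs ∧
          -- Σ_{j≥1} j·α^j·Ω̃_j(g_s,…,g_s,v_s) = Σ_{j≥1} h^j w_{j,s} in Y_s
          ∃ S : Y s,
            HasSum (fun j : ℕ =>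
              (((j : ℝ) + 1) * α ^ (j + 1)) •
                Ω (j + 1) s (fun i => if (i : ℕ) = j then vs else gs)) S ∧
            HasSum (fun j : ℕ => (hY s ^ (j + 1)) (w (j + 1) s)) S := by
  have hρ : ∀ s : ℝ, 0 < s → s < 1 → 1 ≤ C / (1 - s) := fun s hs0 hs1 =>
    (one_le_div (by linarith)).2 (by linarith)
  have hgρ : ∀ s : ℝ, 0 < s → s < 1 → ∀ l, 1 ≤ l →
      ‖g l s‖ ≤ C₀ * (C / (1 - s)) ^ l * l.factorial :=
    fun s hs0 hs1 l hl => (hg_bound l hl s hs0 hs1).trans_eq (by rw [div_pow]; ring)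
  have hvρ : ∀ s : ℝ, 0 < s → s < 1 → ∀ l, 1 ≤ l →
      ‖v l s‖ ≤ A * (C / (1 - s)) ^ l * l.factorial :=
    fun s hs0 hs1 l hl => (hv_bound l hl s hs0 hs1).trans_eq (by rw [div_pow]; ring)
  refine ⟨fun m s => derivCoeff (fun j => Ω j s) α (fun l => g l s) (fun l => v l s) (m - b),
    fun m s' s hs' hs's hs1 => ?_, fun m _ s hs0 hs1 => ?_, fun s hs0 hs1 hr hrα => ?_⟩
  · rw [map_derivCoeff _ α (fun j => Ω j s') (incY s' s) (incX s' s)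
      fun j x => hΩ_inc (j + 1) j.succ_pos s' s hs' hs's hs1.le x]
    simp only [hg_inc _ s' s hs' hs's hs1, hv_inc _ s' s hs' hs's hs1]
  · have := hρ s hs0 hs1
    have := beta1_nonneg (mul_pos hC₀ hα).le
    calc _ ≤ A / C₀ * beta1 (C₀ * α) * (C / (1 - s)) ^ (m - b) * (m - b).factorial :=
          norm_derivCoeff_le (M := fun j => Ω j s)
            (fun j x => hΩ_norm (j + 1) j.succ_pos s hs0 hs1.le x) hα.le hC₀ hA.le
            (by positivity) (hgρ s hs0 hs1) (hvρ s hs0 hs1) _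
      _ ≤ A / C₀ * beta1 (C₀ * α) * (C / (1 - s)) ^ m * m.factorial := by
          gcongr <;> omega
      _ = _ := by rw [div_pow]; ring
  · rw [mul_div_assoc] at hr hrα
    exact hasSum_derivSeries_of_gevrey (M := fun j => Ω j s) (p := fun l => g l s)
      (q := fun l => v l s) (hX s) (hY s) hα hτ.le
      (zero_le_one.trans (hρ s hs0 hs1)) hC₀ hA.le
      (fun j x => hΩ_norm (j + 1) j.succ_pos s hs0 hs1.le x)
      (fun j x i => hΩ_h (j + 1) j.succ_pos s hs0 hs1.le x i) (hhX_norm s hs0 hs1.le) hr hrα b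
      (hgρ s hs0 hs1) (hvρ s hs0 hs1)

theorem stmt11
    -- scales of Banach spaces (X_s), (Y_s), 0 < s ≤ 1
    {X Y : ℝ → Type*}
    [∀ s, NormedAddCommGroup (X s)] [∀ s, NormedSpace ℝ (X s)] [∀ s, CompleteSpace (X s)]
    [∀ s, NormedAddCommGroup (Y s)] [∀ s, NormedSpace ℝ (Y s)] [∀ s, CompleteSpace (Y s)]
    (incX : ∀ s' s : ℝ, X s →L[ℝ] X s')
    (incY : ∀ s' s : ℝ, Y s →L[ℝ] Y s')
    (hincX_norm : ∀ s' s : ℝ, 0 < s' → s' ≤ s → s ≤ 1 → ∀ x : X s, ‖incX s' s x‖ ≤ ‖x‖)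
    (hincY_norm : ∀ s' s : ℝ, 0 < s' → s' ≤ s → s ≤ 1 → ∀ y : Y s, ‖incY s' s y‖ ≤ ‖y‖)
    (hincX_id : ∀ s : ℝ, incX s s = ContinuousLinearMap.id ℝ (X s))
    (hincY_id : ∀ s : ℝ, incY s s = ContinuousLinearMap.id ℝ (Y s))
    (hincX_comp : ∀ s'' s' s : ℝ, 0 < s'' → s'' ≤ s' → s' ≤ s → s ≤ 1 →
      (incX s'' s').comp (incX s' s) = incX s'' s)
    (hincY_comp : ∀ s'' s' s : ℝ, 0 < s'' → s'' ≤ s' → s' ≤ s → s ≤ 1 →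
      (incY s'' s').comp (incY s' s) = incY s'' s)
    -- the operator h of size τ
    (τ : ℝ) (hτ : 0 < τ)
    (hX : ∀ s : ℝ, X s →L[ℝ] X s) (hY : ∀ s : ℝ, Y s →L[ℝ] Y s)
    (hhX_norm : ∀ s : ℝ, 0 < s → s ≤ 1 → ∀ n : ℕ, 1 ≤ n → ∀ x : X s,
      ‖(hX s ^ n) x‖ ≤ τ ^ n / n.factorial * ‖x‖)
    (hhY_norm : ∀ s : ℝ, 0 < s → s ≤ 1 → ∀ n : ℕ, 1 ≤ n → ∀ y : Y s,
      ‖(hY s ^ n) y‖ ≤ τ ^ n / n.factorial * ‖y‖)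
    (hhX_comm : ∀ s' s : ℝ, 0 < s' → s' ≤ s → s ≤ 1 →
      (incX s' s).comp (hX s) = (hX s').comp (incX s' s))
    (hhY_comm : ∀ s' s : ℝ, 0 < s' → s' ≤ s → s ≤ 1 →
      (incY s' s).comp (hY s) = (hY s').comp (incY s' s))
    -- the family of maps f, compatible with inclusions
    (f : ∀ s : ℝ, X s → Y s)
    (hf_comp : ∀ s' s : ℝ, 0 < s' → s' ≤ s → s ≤ 1 → ∀ x : X s,
      incY s' s (f s x) = f s' (incX s' s x))
    (x₀ : X 1) (α : ℝ) (hα : 0 < α)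
    -- the h-j-linear maps Ω_j of norm ≤ 1, compatible with inclusions
    (Ω : ∀ (j : ℕ) (s : ℝ), ContinuousMultilinearMap ℝ (fun _ : Fin j => X s) (Y s))
    (hΩ_norm : ∀ j : ℕ, 1 ≤ j → ∀ s : ℝ, 0 < s → s ≤ 1 → ∀ v : Fin j → X s,
      ‖Ω j s v‖ ≤ ∏ i, ‖v i‖)
    (hΩ_symm : ∀ j : ℕ, 1 ≤ j → ∀ s : ℝ, 0 < s → s ≤ 1 →
      ∀ (v : Fin j → X s) (σ : Equiv.Perm (Fin j)), Ω j s (v ∘ σ) = Ω j s v)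
    (hΩ_h : ∀ j : ℕ, 1 ≤ j → ∀ s : ℝ, 0 < s → s ≤ 1 → ∀ (v : Fin j → X s) (i : Fin j),
      Ω j s (Function.update v i (hX s (v i))) = hY s (Ω j s v))
    (hΩ_inc : ∀ j : ℕ, 1 ≤ j → ∀ s' s : ℝ, 0 < s' → s' ≤ s → s ≤ 1 → ∀ v : Fin j → X s,
      incY s' s (Ω j s v) = Ω j s' fun i => incX s' s (v i))
    -- the expansion f(x₀ + w) = f(x₀) + Σ_{j≥1} α^j Ω_j(w,…,w) for ‖w‖ < 1/α
    (hf_exp : ∀ s : ℝ, 0 < s → s ≤ 1 → ∀ w : X s, ‖w‖ < 1 / α →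
      HasSum (fun j : ℕ => α ^ (j + 1) • Ω (j + 1) s fun _ => w)
        (f s (incX s 1 x₀ + w) - f s (incX s 1 x₀)))
    -- the Gevrey data g_n ∈ X̊₁
    (C₀ C : ℝ) (hC₀ : 0 < C₀) (hC : 0 < C)
    (g : ℕ → ∀ s : ℝ, X s)
    (hg_inc : ∀ (n : ℕ) (s' s : ℝ), 0 < s' → s' ≤ s → s < 1 → incX s' s (g n s) = g n s')
    (hg_bound : ∀ n : ℕ, 1 ≤ n → ∀ s : ℝ, 0 < s → s < 1 →
      ‖g n s‖ ≤ C₀ * C ^ n * n.factorial / (1 - s) ^ n)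
    (hC1 : 1 ≤ C)
    -- the data b, A and v_k ∈ X̊₁
    (b : ℕ) (A : ℝ) (hA : 0 < A)
    (v : ℕ → ∀ s : ℝ, X s)
    (hv_inc : ∀ (k : ℕ) (s' s : ℝ), 0 < s' → s' ≤ s → s < 1 → incX s' s (v k s) = v k s')
    (hv_bound : ∀ k : ℕ, 1 ≤ k → ∀ s : ℝ, 0 < s → s < 1 →
      ‖v k s‖ ≤ A * C ^ k * k.factorial / (1 - s) ^ k) :
    ∃ w : ℕ → ∀ s : ℝ, Y s,
      (∀ (j : ℕ) (s' s : ℝ), 0 < s' → s' ≤ s → s < 1 → incY s' s (w j s) = w j s') ∧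
      (∀ j : ℕ, 1 ≤ j → ∀ s : ℝ, 0 < s → s < 1 →
        ‖w j s‖ ≤ A / C₀ * beta1 (C₀ * α) * C ^ j * j.factorial / (1 - s) ^ j) ∧
      ∀ s : ℝ, 0 < s → s < 1 → τ * C / (1 - s) < 1 →
        (∑' n : ℕ, (τ * C / (1 - s)) ^ (n + 1)) < 1 / (C₀ * α) →
        -- v_s = h^b Σ_{k≥1} h^k v_{k,s} and g_s = Σ_{k≥1} h^k g_{k,s} converge absolutely
        Summable (fun k : ℕ => ‖(hX s ^ (b + (k + 1))) (v (k + 1) s)‖) ∧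
        Summable (fun k : ℕ => ‖(hX s ^ (k + 1)) (g (k + 1) s)‖) ∧
        ∃ (vs gs : X s),
          HasSum (fun k : ℕ => (hX s ^ (b + (k + 1))) (v (k + 1) s)) vs ∧
          HasSum (fun k : ℕ => (hX s ^ (k + 1)) (g (k + 1) s)) gs ∧
          -- Σ_{j≥1} j·α^j·Ω̃_j(g_s,…,g_s,v_s) = Σ_{j≥1} h^j w_{j,s} in Y_s
          ∃ S : Y s,
            HasSum (fun j : ℕ =>
              (((j : ℝ) + 1) * α ^ (j + 1)) •
                Ω (j + 1) s (fun i => if (i : ℕ) = j then vs else gs)) S ∧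
            HasSum (fun j : ℕ => (hY s ^ (j + 1)) (w (j + 1) s)) S :=
  stmt11_general incX incY τ hτ hX hY hhX_norm α hα Ω hΩ_norm hΩ_h hΩ_inc C₀ C hC₀ g hg_inc hg_bound
    hC1 b A hA v hv_inc hv_bound
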